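/- No mechanism is both popular and strategy-proof. -/

import Mathlib

open scoped Classical

section Defs

variable {I O : Type} [Fintype I] [Fintype O]

/-- A mechanism maps each problem (preference profile, capacity profile) to an assignment. -/
abbrev Mechanism (I O : Type) : Type :=
  (I → LinearOrder (Option O)) → (O → ℕ) → I → Option O

/-- `x` is strictly preferred to `y` under the strict preference (linear order) `p`,
where `none` represents being unassigned (∅). -/
def Prefers (p : LinearOrder (Option O)) (x y : Option O) : Prop := p.lt y x

/-- A matching: each object `a` is assigned to at most `q a` agents. -/
def IsMatching (q : O → ℕ) (μ : I → Option O) : Prop :=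
  ∀ a : O, (Finset.univ.filter fun i : I => μ i = some a).card ≤ q a

/-- Every object has capacity at least one. -/
def ValidCaps (q : O → ℕ) : Prop := ∀ a : O, 1 ≤ q a

/-- `μ` is more w-popular than `μ'`. -/
def MoreWPopular (w : I → ℝ) (P : I → LinearOrder (Option O)) (μ μ' : I → Option O) : Prop :=
  (∑ j ∈ Finset.univ.filter fun j : I => Prefers (P j) (μ' j) (μ j), w j)
    < ∑ i ∈ Finset.univ.filter fun i : I => Prefers (P i) (μ i) (μ' i), w i

/-- `μ` is a w-popular matching for problem `(P, q)`. -/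
def WPopular (w : I → ℝ) (P : I → LinearOrder (Option O)) (q : O → ℕ)
    (μ : I → Option O) : Prop :=
  IsMatching q μ ∧ ∀ μ', IsMatching q μ' → ¬ MoreWPopular w P μ' μ

/-- `μ` is more popular than `μ'` (unweighted, counting agents). -/
def MorePopular (P : I → LinearOrder (Option O)) (μ μ' : I → Option O) : Prop :=
  (Finset.univ.filter fun j : I => Prefers (P j) (μ' j) (μ j)).card
    < (Finset.univ.filter fun i : I => Prefers (P i) (μ i) (μ' i)).card

/-- `μ` is a popular matching for problem `(P, q)`. -/
def Popular (P : I → LinearOrder (Option O)) (q : O → ℕ) (μ : I → Option O) : Prop :=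
  IsMatching q μ ∧ ∀ μ', IsMatching q μ' → ¬ MorePopular P μ' μ

/-- `μ'` Pareto improves upon `μ`. -/
def ParetoImproves (P : I → LinearOrder (Option O)) (μ' μ : I → Option O) : Prop :=
  (∀ i : I, (P i).le (μ i) (μ' i)) ∧ ∃ j : I, Prefers (P j) (μ' j) (μ j)

/-- `μ` is non-wasteful: no agent prefers an object with unfilled capacity to her assignment. -/
def NonWasteful (P : I → LinearOrder (Option O)) (q : O → ℕ) (μ : I → Option O) : Prop :=
  ∀ (i : I) (a : O), (Finset.univ.filter fun j : I => μ j = some a).card < q a →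
    ¬ Prefers (P i) (some a) (μ i)

/-- The enumeration `e` lists the agents in weakly decreasing order of weight. -/
def DecreasingEnum (w : I → ℝ) (e : Fin (Fintype.card I) ≃ I) : Prop :=
  ∀ j k : Fin (Fintype.card I), j ≤ k → w (e k) ≤ w (e j)

/-- The weight profile is cumulatively ordered (w.r.t. the decreasing enumeration `e`):
each agent's weight is at least the sum of the weights of all later agents. -/
def CumulativelyOrdered (w : I → ℝ) (e : Fin (Fintype.card I) ≃ I) : Prop :=
  ∀ j : Fin (Fintype.card I),
    (∑ k ∈ Finset.univ.filter fun k : Fin (Fintype.card I) => j < k, w (e k)) ≤ w (e j)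

/-- All weights are pairwise different. -/
def DistinctWeights (w : I → ℝ) : Prop := Function.Injective w

/-- Essentially distinct (w.r.t. the decreasing enumeration `e`): all weights except possibly
the last two are pairwise different, the last two are equal, and the third-from-last weight is
at least the sum of the last two.  (Paper indices `i_1, …, i_n` correspond to `e 0, …, e (n-1)`.) -/
def EssentiallyDistinct (w : I → ℝ) (e : Fin (Fintype.card I) ≃ I) : Prop :=
  (∀ j k : Fin (Fintype.card I), j < k → (k : ℕ) + 2 ≤ Fintype.card I → w (e j) ≠ w (e k)) ∧
  (∀ j k : Fin (Fintype.card I), (j : ℕ) + 2 = Fintype.card I → (k : ℕ) + 1 = Fintype.card I →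
    w (e j) = w (e k)) ∧
  (∀ j k l : Fin (Fintype.card I), (j : ℕ) + 3 = Fintype.card I →
    (k : ℕ) + 2 = Fintype.card I → (l : ℕ) + 1 = Fintype.card I →
    w (e k) + w (e l) ≤ w (e j))

/-- The most preferred element (under `p`) of `{∅} ∪ {objects with remaining capacity}`. -/
noncomputable def sdChoice (p : LinearOrder (Option O)) (rem : O → ℕ) : Option O :=
  @Finset.max' (Option O) p
    (insert none ((Finset.univ.filter fun a : O => 0 < rem a).image some))
    ⟨none, Finset.mem_insert_self _ _⟩

/-- State of the serial dictatorship after the first `k` agents (in the order `e`) have picked: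
the partial assignment and the remaining capacities. -/
noncomputable def sdState (e : Fin (Fintype.card I) ≃ I)
    (P : I → LinearOrder (Option O)) (q : O → ℕ) : ℕ → (I → Option O) × (O → ℕ)
  | 0 => (fun _ => none, q)
  | k + 1 =>
    let prev := sdState e P q k
    if h : k < Fintype.card I then
      let i := e ⟨k, h⟩
      let c := sdChoice (P i) prev.2
      (Function.update prev.1 i c, fun a => if c = some a then prev.2 a - 1 else prev.2 a)
    else prev

/-- The outcome of the serial dictatorship with agent ordering `e` at problem `(P, q)`:
agents pick, one by one in the order `e`, their most preferred acceptable object with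
remaining capacity (and get ∅ if none remains). -/
noncomputable def SD (e : Fin (Fintype.card I) ≃ I)
    (P : I → LinearOrder (Option O)) (q : O → ℕ) : I → Option O :=
  (sdState e P q (Fintype.card I)).1

/-- An agent ordering is consistent with the weight profile `w` if agents with strictly larger
weight come strictly earlier. -/
def ConsistentOrder (w : I → ℝ) (e : Fin (Fintype.card I) ≃ I) : Prop :=
  ∀ i j : I, w j < w i → e.symm i < e.symm j

/-- A mechanism always produces a matching. -/
def IsMechanism (ψ : Mechanism I O) : Prop :=
  ∀ P q, ValidCaps q → IsMatching q (ψ P q)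

/-- Strategy-proofness: no agent can ever obtain a strictly preferred assignment
by misreporting. -/
def StrategyProof (ψ : Mechanism I O) : Prop :=
  ∀ P q, ValidCaps q → ∀ (i : I) (P'i : LinearOrder (Option O)),
    ¬ Prefers (P i) (ψ (Function.update P i P'i) q i) (ψ P q i)

/-- A mechanism is w-popular if its outcome is w-popular whenever a w-popular matching exists. -/
def WPopularMech (w : I → ℝ) (ψ : Mechanism I O) : Prop :=
  ∀ P q, ValidCaps q → (∃ μ, WPopular w P q μ) → WPopular w P q (ψ P q)

/-- A mechanism is popular if its outcome is popular whenever a popular matching exists. -/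
def PopularMech (ψ : Mechanism I O) : Prop :=
  ∀ P q, ValidCaps q → (∃ μ, Popular P q μ) → Popular P q (ψ P q)

/-- A mechanism is non-wasteful if its outcome is always non-wasteful. -/
def NonWastefulMech (ψ : Mechanism I O) : Prop :=
  ∀ P q, ValidCaps q → NonWasteful P q (ψ P q)

/-- `p` declares `a` as its only acceptable object (the class 𝒫ₐ). -/
def OnlyAcceptable (p : LinearOrder (Option O)) (a : O) : Prop :=
  p.lt none (some a) ∧ ∀ b : O, b ≠ a → p.lt (some b) none

/-- `p` declares no object acceptable (the class 𝒫_∅). -/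
def NothingAcceptable (p : LinearOrder (Option O)) : Prop :=
  ∀ b : O, p.lt (some b) none

/-- Preserving dispute resolutions. -/
def PreservesDisputeResolutions (ψ : Mechanism I O) : Prop :=
  ∀ P q, ValidCaps q → ∀ (i j : I) (a : O) (P'i : LinearOrder (Option O)),
    ψ P q j = some a → Prefers (P i) (some a) (ψ P q i) →
    OnlyAcceptable P'i a → ψ (Function.update P i P'i) q i = none →
    ∀ (P'' : I → LinearOrder (Option O)) (q' : O → ℕ), ValidCaps q' → q' a = 1 →
      OnlyAcceptable (P'' i) a → OnlyAcceptable (P'' j) a →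
      (∀ k : I, k ≠ i → k ≠ j → NothingAcceptable (P'' k)) →
      ψ P'' q' i = none ∧ ψ P'' q' j = some a

/-- `P'` is a (pure) Nash equilibrium of the preference-reporting game induced by `ψ`
at the problem `(P, q)` (true preferences `P`). -/
def NashEq (ψ : Mechanism I O) (P : I → LinearOrder (Option O)) (q : O → ℕ)
    (P' : I → LinearOrder (Option O)) : Prop :=
  ∀ (i : I) (P''i : LinearOrder (Option O)),
    ¬ Prefers (P i) (ψ (Function.update P' i P''i) q i) (ψ P' q i)

/-- The mechanism admits a Nash equilibrium at every problem. -/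
def AdmitsNash (ψ : Mechanism I O) : Prop :=
  ∀ P q, ValidCaps q → ∃ P', NashEq ψ P q P'

/-- w-popularity in equilibrium: every Nash-equilibrium outcome is w-popular
whenever a w-popular matching exists. -/
def WPopularInEquilibrium (w : I → ℝ) (ψ : Mechanism I O) : Prop :=
  ∀ P q, ValidCaps q → ∀ P', NashEq ψ P q P' →
    (∃ μ, WPopular w P q μ) → WPopular w P q (ψ P' q)

end Defs

/-!
Take three agents who rank `a ≻ b ≻ ∅`, unit capacities, and let everyone else accept nothing.
If one of the three, `u`, reports `b ≻ a` instead, then giving `a` to one of the other two and `b`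
to `u` is popular, and every popular matching gives `b` to `u`: otherwise it is beaten by such a
matching. So a popular mechanism gives `u` its first choice after the misreport, and
strategy-proofness forces it to give `u` the object `a` or `b` under truthful reports. This holds
for each of the three agents, but two objects of capacity one cannot serve three agents.
-/

open Finset

variable {I O : Type}

lemma prefers_irrefl (p : LinearOrder (Option O)) (x : Option O) : ¬ Prefers p x x :=
  @lt_irrefl _ p.toPreorder x

lemma Prefers.asymm {p : LinearOrder (Option O)} {x y : Option O} (h : Prefers p x y) :
    ¬ Prefers p y x :=
  @lt_asymm _ p.toPreorder _ _ h

def IsFirstChoice (p : LinearOrder (Option O)) (x : Option O) : Prop :=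
  ∀ z, z ≠ x → Prefers p x z

lemma IsFirstChoice.not_prefers {p : LinearOrder (Option O)} {x : Option O}
    (h : IsFirstChoice p x) (z : Option O) : ¬ Prefers p z x := by
  by_cases hz : z = x
  · exact hz ▸ prefers_irrefl p z
  · exact (h z hz).asymm

lemma eq_of_prefers_of_isFirstChoice {P : I → LinearOrder (Option O)} {μ ν : I → Option O}
    {f : I} (hμ : ∀ v, v ≠ f → IsFirstChoice (P v) (μ v)) {v : I}
    (hv : Prefers (P v) (ν v) (μ v)) : v = f := by
  by_contra hvf
  exact (hμ v hvf).not_prefers _ hv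

noncomputable def twoAssignment (s u : I) (a b : O) : I → Option O :=
  fun v => if v = s then some a else if v = u then some b else none

section

variable {s u : I} {a b : O}

@[simp] lemma twoAssignment_left : twoAssignment s u a b s = some a := by simp [twoAssignment]

@[simp] lemma twoAssignment_right (hsu : s ≠ u) : twoAssignment s u a b u = some b := by
  simp [twoAssignment, hsu.symm]

lemma twoAssignment_of_ne {v : I} (hs : v ≠ s) (hu : v ≠ u) : twoAssignment s u a b v = none := by
  simp [twoAssignment, hs, hu]

lemma isFirstChoice_twoAssignment {P : I → LinearOrder (Option O)} {f : I} (hsu : s ≠ u)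
    (hs : IsFirstChoice (P s) (some a)) (hu : IsFirstChoice (P u) (some b))
    (hothers : ∀ v, v ≠ s → v ≠ u → v ≠ f → IsFirstChoice (P v) none) :
    ∀ v, v ≠ f → IsFirstChoice (P v) (twoAssignment s u a b v) := by
  intro v hvf
  by_cases hvs : v = s
  · subst hvs; simpa using hs
  by_cases hvu : v = u
  · subst hvu; simpa [hsu] using hu
  rw [twoAssignment_of_ne hvs hvu]
  exact hothers v hvs hvu hvf

end

variable [Fintype I]

lemma validCaps_one : ValidCaps (1 : O → ℕ) := fun _ => le_rfl

lemma isMatching_one_iff {μ : I → Option O} :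
    IsMatching 1 μ ↔ ∀ v w a, μ v = some a → μ w = some a → v = w := by
  simp only [IsMatching, Pi.one_apply, card_le_one, mem_filter, mem_univ, true_and]
  exact ⟨fun h v w a hv hw => h a v hv w hw, fun h a v hv w hw => h v w a hv hw⟩

lemma IsMatching.eq_of_eq_some {μ : I → Option O} (h : IsMatching 1 μ) {v w : I} {a : O}
    (hv : μ v = some a) (hw : μ w = some a) : v = w :=
  isMatching_one_iff.1 h v w a hv hw

lemma morePopular_of_subset {P : I → LinearOrder (Option O)} {ν μ : I → Option O}
    {A B : Finset I} (hA : ∀ v, Prefers (P v) (μ v) (ν v) → v ∈ A)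
    (hB : ∀ v ∈ B, Prefers (P v) (ν v) (μ v)) (hAB : A.card < B.card) : MorePopular P ν μ :=
  calc _ ≤ A.card := card_le_card fun v hv => hA v (mem_filter.1 hv).2
    _ < B.card := hAB
    _ ≤ _ := card_le_card fun v hv => mem_filter.2 ⟨mem_univ v, hB v hv⟩

section

variable {s u : I} {a b : O}

lemma isMatching_twoAssignment (hsu : s ≠ u) (hab : a ≠ b) :
    IsMatching 1 (twoAssignment s u a b) := by
  refine isMatching_one_iff.2 fun v w c hv hw => ?_
  unfold twoAssignment at hv hw
  split_ifs at hv hw <;> simp_all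

/-- Only `f` can gain against `twoAssignment s u a b`, and only by taking `a` from `s` or `b`
from `u`, who then loses. -/
lemma popular_twoAssignment {P : I → LinearOrder (Option O)} {f : I} (hsf : s ≠ f) (huf : u ≠ f)
    (hsu : s ≠ u) (hab : a ≠ b)
    (hfirst : ∀ v, v ≠ f → IsFirstChoice (P v) (twoAssignment s u a b v))
    (hf : ∀ z, Prefers (P f) z none → z = some a ∨ z = some b) :
    Popular P 1 (twoAssignment s u a b) := by
  refine ⟨isMatching_twoAssignment hsu hab, fun ν hν hmore => ?_⟩
  have hgain : (univ.filter fun v => Prefers (P v) (ν v) (twoAssignment s u a b v)) ⊆ {f} :=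
    fun v hv => mem_singleton.2 (eq_of_prefers_of_isFirstChoice hfirst (mem_filter.1 hv).2)
  have hnoloss : ∀ v, ¬ Prefers (P v) (twoAssignment s u a b v) (ν v) := fun v hv =>
    (card_le_card hgain).trans_eq (card_singleton f) |>.not_gt <|
      Nat.lt_of_le_of_lt (card_pos.2 ⟨v, mem_filter.2 ⟨mem_univ v, hv⟩⟩) hmore
  obtain ⟨g, hg⟩ := card_pos.1 (pos_of_gt hmore)
  have hfg := (mem_filter.1 hg).2
  rw [mem_singleton.1 (hgain hg), twoAssignment_of_ne hsf.symm huf.symm] at hfg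
  rcases hf _ hfg with hfa | hfb
  · exact hnoloss s <| hfirst s hsf _ fun hsa =>
      hsf (hν.eq_of_eq_some (hsa.trans twoAssignment_left) hfa)
  · exact hnoloss u <| hfirst u huf _ fun hub =>
      huf (hν.eq_of_eq_some (hub.trans (twoAssignment_right hsu)) hfb)

lemma Popular.eq_some_left_of_ne_some_right {P : I → LinearOrder (Option O)} {f : I}
    {μ : I → Option O} (hμ : Popular P 1 μ) (hsf : s ≠ f) (huf : u ≠ f) (hsu : s ≠ u)
    (hab : a ≠ b) (hfirst : ∀ v, v ≠ f → IsFirstChoice (P v) (twoAssignment s u a b v))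
    (hμu : μ u ≠ some b) : μ s = some a := by
  by_contra hμs
  refine hμ.2 _ (isMatching_twoAssignment hsu hab) <| morePopular_of_subset (A := {f})
    (B := {s, u}) (fun v hv => mem_singleton.2 (eq_of_prefers_of_isFirstChoice hfirst hv)) ?_ ?_
  · simp only [mem_insert, mem_singleton]
    rintro v (rfl | rfl)
    · exact hfirst v hsf _ (by simpa using hμs)
    · exact hfirst v huf _ (by simpa [hsu] using hμu)
  · rw [card_singleton, card_pair hsu]
    norm_num

end

/-- Otherwise comparing `μ` with `twoAssignment s u a b` and with `twoAssignment t u a b` would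
force `μ` to give `a` to both `s` and `t`. -/
lemma Popular.eq_some_of_isFirstChoice {P : I → LinearOrder (Option O)} {μ : I → Option O}
    (hμ : Popular P 1 μ) {s t u : I} {a b : O} (hst : s ≠ t) (hsu : s ≠ u) (htu : t ≠ u)
    (hab : a ≠ b) (hs : IsFirstChoice (P s) (some a)) (ht : IsFirstChoice (P t) (some a))
    (hu : IsFirstChoice (P u) (some b))
    (hothers : ∀ v, v ≠ s → v ≠ t → v ≠ u → IsFirstChoice (P v) none) : μ u = some b := by
  by_contra hμu
  have hμs := hμ.eq_some_left_of_ne_some_right hst htu.symm hsu hab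
    (isFirstChoice_twoAssignment hsu hs hu fun v h1 h2 h3 => hothers v h1 h3 h2) hμu
  have hμt := hμ.eq_some_left_of_ne_some_right hst.symm hsu.symm htu hab
    (isFirstChoice_twoAssignment htu ht hu fun v h1 h2 h3 => hothers v h3 h1 h2) hμu
  exact hst (hμ.1.eq_of_eq_some hμs hμt)

variable [Fintype O]

noncomputable abbrev rankPref (r : Option O → ℕ) : LinearOrder (Option O) :=
  LinearOrder.lift' (fun x => toLex (r x, Fintype.equivFin (Option O) x)) fun _ _ h =>
    (Fintype.equivFin (Option O)).injective (Prod.ext_iff.1 (toLex.injective h)).2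

lemma prefers_rankPref_of_lt {r : Option O → ℕ} {x y : Option O} (h : r y < r x) :
    Prefers (rankPref r) x y :=
  Prod.Lex.toLex_lt_toLex.2 (Or.inl h)

noncomputable abbrev twoPref (a b : O) : LinearOrder (Option O) :=
  rankPref fun x => if x = some a then 3 else if x = some b then 2 else if x = none then 1 else 0

noncomputable abbrev emptyPref : LinearOrder (Option O) :=
  rankPref fun x => if x = none then 1 else 0

lemma twoPref_isFirstChoice (a b : O) : IsFirstChoice (twoPref a b) (some a) := fun z hz => by
  apply prefers_rankPref_of_lt
  simp only [hz, if_true, if_false]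
  split_ifs <;> omega

lemma prefers_twoPref_of_ne {a b : O} (hab : a ≠ b) {z : Option O} (ha : z ≠ some a)
    (hb : z ≠ some b) : Prefers (twoPref a b) (some b) z := by
  apply prefers_rankPref_of_lt
  simp only [ha, hb, Option.some_inj, hab.symm, if_true, if_false]
  split_ifs <;> omega

lemma eq_or_eq_of_prefers_twoPref_none {a b : O} {z : Option O}
    (h : Prefers (twoPref a b) z none) : z = some a ∨ z = some b := by
  by_contra! hz
  refine h.asymm (prefers_rankPref_of_lt ?_)
  rcases z with _ | c
  · exact absurd h (prefers_irrefl _ _)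
  · simp [hz.1, hz.2]

lemma emptyPref_isFirstChoice : IsFirstChoice (emptyPref : LinearOrder (Option O)) none :=
  fun z hz => prefers_rankPref_of_lt (by simp [hz])

noncomputable abbrev sharedProfile (S : Finset I) (a b : O) : I → LinearOrder (Option O) :=
  fun v => if v ∈ S then twoPref a b else emptyPref

lemma StrategyProof.eq_or_eq_of_popularMech {ψ : Mechanism I O} (hsp : StrategyProof ψ)
    (hpop : PopularMech ψ) {S : Finset I} (hS : S.card = 3) {a b : O} (hab : a ≠ b) {u : I}
    (hu : u ∈ S) :
    ψ (sharedProfile S a b) 1 u = some a ∨ ψ (sharedProfile S a b) 1 u = some b := by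
  obtain ⟨s, t, hst, hSu⟩ : ∃ s t, s ≠ t ∧ S.erase u = {s, t} :=
    card_eq_two.1 (by rw [card_erase_of_mem hu, hS])
  have hs : s ∈ S.erase u := by simp [hSu]
  have ht : t ∈ S.erase u := by simp [hSu]
  have hothers : ∀ v, v ≠ s → v ≠ t → v ≠ u → v ∉ S := fun v hvs hvt hvu hv => by
    have hv' : v ∈ S.erase u := mem_erase.2 ⟨hvu, hv⟩
    simp [hSu, hvs, hvt] at hv'
  set G := sharedProfile S a b
  set Q := Function.update G u (twoPref b a)
  have hQs : Q s = twoPref a b := by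
    simp [Q, G, sharedProfile, ne_of_mem_erase hs, mem_of_mem_erase hs]
  have hQt : Q t = twoPref a b := by
    simp [Q, G, sharedProfile, ne_of_mem_erase ht, mem_of_mem_erase ht]
  have hQu : IsFirstChoice (Q u) (some b) := by simpa [Q] using twoPref_isFirstChoice b a
  have hQothers : ∀ v, v ≠ s → v ≠ t → v ≠ u → IsFirstChoice (Q v) none := fun v hvs hvt hvu => by
    simpa [Q, G, sharedProfile, hvu, hothers v hvs hvt hvu] using emptyPref_isFirstChoice
  have hsu := ne_of_mem_erase hs
  have htu := ne_of_mem_erase ht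
  have hQpop : Popular Q 1 (ψ Q 1) := hpop Q 1 validCaps_one
    ⟨_, popular_twoAssignment (f := t) hst htu.symm hsu hab
      (isFirstChoice_twoAssignment hsu (hQs ▸ twoPref_isFirstChoice a b) hQu
        fun v h1 h2 h3 => hQothers v h1 h3 h2)
      (hQt ▸ fun _ => eq_or_eq_of_prefers_twoPref_none)⟩
  have hψQ : ψ Q 1 u = some b := hQpop.eq_some_of_isFirstChoice hst hsu htu hab
    (hQs ▸ twoPref_isFirstChoice a b) (hQt ▸ twoPref_isFirstChoice a b) hQu hQothers
  have hGu : G u = twoPref a b := if_pos hu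
  by_contra! hψG
  exact hsp G 1 validCaps_one u (twoPref b a) <| by
    rw [hψQ, hGu]
    exact prefers_twoPref_of_ne hab hψG.1 hψG.2

theorem not_popularMech_and_strategyProof {ψ : Mechanism I O} (hψ : IsMechanism ψ)
    (hpop : PopularMech ψ) (hsp : StrategyProof ψ) {S : Finset I} (hS : S.card = 3) {a b : O}
    (hab : a ≠ b) : False := by
  set G := sharedProfile S a b
  have hmaps : Set.MapsTo (ψ G 1) S ({some a, some b} : Finset (Option O)) := fun u hu => by
    simpa using hsp.eq_or_eq_of_popularMech hpop hS hab hu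
  obtain ⟨x, hx, y, -, hxy, hψxy⟩ := exists_ne_map_eq_of_card_lt_of_maps_to
    (card_le_two.trans_lt (by rw [hS]; norm_num)) hmaps
  obtain ⟨c, hc⟩ : ∃ c, ψ G 1 x = some c := by
    rcases hsp.eq_or_eq_of_popularMech hpop hS hab hx with h | h <;> exact ⟨_, h⟩
  exact hxy ((hψ G 1 validCaps_one).eq_of_eq_some hc (hψxy ▸ hc))

/-- No mechanism is both popular and strategy-proof. -/
theorem stmt12 {I O : Type} [Fintype I] [Fintype O]
    (hI : 3 ≤ Fintype.card I) (hIO : Fintype.card I ≤ Fintype.card O) :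
    ¬ ∃ ψ : Mechanism I O, IsMechanism ψ ∧ PopularMech ψ ∧ StrategyProof ψ := by
  rintro ⟨ψ, hψ, hpop, hsp⟩
  obtain ⟨S, -, hS⟩ := exists_subset_card_eq (s := (univ : Finset I)) hI
  obtain ⟨a, b, hab⟩ := Fintype.one_lt_card_iff.1 (by omega : 1 < Fintype.card O)
  exact not_popularMech_and_strategyProof hψ hpop hsp hS hab
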